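/- Let P be a d-dimensional reflexive polytope, B ⊆ S a nonempty set of pairwise orthogonal semisimple roots, and A := R ∩ lin_ℝ(B). Then A ⊆ S; moreover A = {b : b ∈ B} ∪ {−b : b ∈ B} ∪ {b − b' : b, b' ∈ B, b ≠ b', b equivalent to b'}, |A| = |B| + Σ_{i=1}^t c_i², where c_1, …, c_t are the cardinalities of the equivalence classes into which B is partitioned, and the number of distinct facets of P containing an element of A equals |B| + t ≤ 2|B|. -/

import Mathlib

open Finset Set Pointwise

noncomputable section

/-- The standard pairing `⟨x, y⟩ = ∑ i, x i * y i` on `ℝ^d`. -/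
def pairR {d : ℕ} (x y : Fin d → ℝ) : ℝ := ∑ i, x i * y i

/-- A point of `ℝ^d` is a lattice point if all its coordinates are integers. -/
def IsLatticePt {d : ℕ} (x : Fin d → ℝ) : Prop := ∀ i, ∃ n : ℤ, x i = (n : ℝ)

/-- A lattice polytope: the convex hull of finitely many lattice points. -/
def IsLatticePolytope {d : ℕ} (P : Set (Fin d → ℝ)) : Prop :=
  ∃ V : Finset (Fin d → ℝ), (∀ x ∈ V, IsLatticePt x) ∧
    P = convexHull ℝ (V : Set (Fin d → ℝ))

/-- The dual polytope `P* = {y : ⟨x, y⟩ ≥ -1 for all x ∈ P}`. -/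
def polarDual {d : ℕ} (P : Set (Fin d → ℝ)) : Set (Fin d → ℝ) :=
  {y | ∀ x ∈ P, -1 ≤ pairR x y}

/-- A reflexive polytope: a (full-dimensional) lattice polytope with `0` in its interior
whose dual is again a lattice polytope. -/
def IsReflexive {d : ℕ} (P : Set (Fin d → ℝ)) : Prop :=
  IsLatticePolytope P ∧ (0 : Fin d → ℝ) ∈ interior P ∧ IsLatticePolytope (polarDual P)

/-- `F` is the facet of `P` with (unique) inner normal `η` normalized by `⟨η, F⟩ = -1`:
`F` is the part of `P` where the valid inequality `⟨η, ·⟩ ≥ -1` is tight, and `F` has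
dimension `d - 1`. -/
def IsFacetNormal {d : ℕ} (P : Set (Fin d → ℝ)) (η : Fin d → ℝ)
    (F : Set (Fin d → ℝ)) : Prop :=
  (∀ x ∈ P, -1 ≤ pairR η x) ∧ F = {x ∈ P | pairR η x = -1} ∧ F.Nonempty ∧
    Module.finrank ℝ (vectorSpan ℝ F) = d - 1

/-- `F` is a facet ((d-1)-dimensional face) of `P`. -/
def IsFacet {d : ℕ} (P F : Set (Fin d → ℝ)) : Prop := ∃ η, IsFacetNormal P η F

/-- A root of `P`: a lattice point in the relative interior of a facet of `P`. -/
def IsRoot {d : ℕ} (P : Set (Fin d → ℝ)) (m : Fin d → ℝ) : Prop :=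
  IsLatticePt m ∧ ∃ F, IsFacet P F ∧ m ∈ intrinsicInterior ℝ F

/-- The facet `F_m` of `P` containing the root `m` in its relative interior
(for a root `m` there is exactly one such facet). -/
def rootFacet {d : ℕ} (P : Set (Fin d → ℝ)) (m : Fin d → ℝ) : Set (Fin d → ℝ) :=
  ⋃₀ {F | IsFacet P F ∧ m ∈ intrinsicInterior ℝ F}

/-- The inner normal `η_m = η_{F_m}` of the facet of `P` containing the root `m`. -/
def rootNormal {d : ℕ} (P : Set (Fin d → ℝ)) (m : Fin d → ℝ) : Fin d → ℝ :=
  Classical.epsilon fun η => IsFacetNormal P η (rootFacet P m)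

/-- The real extension of the `ℤ`-linear map on the lattice given by an integer matrix. -/
def intMatMap {d : ℕ} (A : Matrix (Fin d) (Fin d) ℤ) (x : Fin d → ℝ) : Fin d → ℝ :=
  (A.map (Int.cast : ℤ → ℝ)).mulVec x

/-- `P` and `Q` are isomorphic as lattice polytopes: some `g ∈ GL_d(ℤ)` has real
extension mapping `P` onto `Q`. -/
def IsLatticeIso {d : ℕ} (P Q : Set (Fin d → ℝ)) : Prop :=
  ∃ A : Matrix (Fin d) (Fin d) ℤ, IsUnit A.det ∧ intMatMap A '' P = Q

end

/-!
Write `η_m` for the normal of the facet `F_m` of a root `m`. Two facts drive everything: a point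
`u ∈ P*` with `⟨u, m⟩ = -1` is `η_m` (an inequality valid on `P` and tight at a relative interior
point of a facet defines that facet), and a lattice point `u ∈ P*` pairs with a semisimple root `b`
to `-1`, `0` or `1`, being `η_b`, resp. `η_{-b}`, in the two extreme cases. For an orthogonal
family `B` this gives `⟨η_e, b⟩ = -δ_{eb}` and `⟨η_{-e}, b⟩ = [e ∼ b]`.

If `b ∼ b'`, every vertex of `P*` other than `η_b` is `≥ 0` at `b - b'`, so `b - b'` is a root in
the relative interior of `F_b`. Conversely, let `m = ∑ c_b b` be a root in the span of `B`. Then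
`η_m` is some `η_b` or `η_{-b}` (otherwise `⟨η_m, m⟩ = 0`), and the integers `c_b = -⟨η_b, m⟩ ≤ 1`
and class sums `⟨η_{-b}, m⟩ ≥ -1` reach their bound only where that normal is `η_m`. As these
normals are pairwise distinct (up to equivalence for the `η_{-b}`), `c` is `δ_b`, `-δ_b` or
`δ_b - δ_{b'}` with `b ∼ b'`.

For the count, `(b, b) ↦ b`, `(b, b') ↦ b - b'` is injective on pairs of equivalent roots (`b` is
the only `e` with `⟨η_e, ·⟩ = -1` there), and the facets met are the `|B|` distinct `F_b` and one
`F_{-b}` per class.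

`pairR` is definitionally `dotProduct`, in which everything below is phrased.
-/

variable {d : ℕ}

theorem IsLatticePt.sub {x y : Fin d → ℝ} (hx : IsLatticePt x) (hy : IsLatticePt y) :
    IsLatticePt (x - y) := fun i => by
  obtain ⟨n, hn⟩ := hx i
  obtain ⟨k, hk⟩ := hy i
  exact ⟨n - k, by simp [hn, hk]⟩

theorem IsLatticePt.exists_dotProduct_eq_intCast {x y : Fin d → ℝ} (hx : IsLatticePt x)
    (hy : IsLatticePt y) : ∃ n : ℤ, x ⬝ᵥ y = n := by
  choose f hf using hx
  choose g hg using hy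
  exact ⟨∑ i, f i * g i, by simp [dotProduct, hf, hg]⟩

theorem eq_neg_one_or_eq_zero_or_eq_one_of_intCast {a : ℝ} (ha : ∃ n : ℤ, a = n)
    (h₁ : -1 ≤ a) (h₂ : a ≤ 1) : a = -1 ∨ a = 0 ∨ a = 1 := by
  obtain ⟨n, rfl⟩ := ha
  have : -1 ≤ n ∧ n ≤ 1 := ⟨by exact_mod_cast h₁, by exact_mod_cast h₂⟩
  obtain rfl | rfl | rfl : n = -1 ∨ n = 0 ∨ n = 1 := by omega
  all_goals simp

theorem eq_one_or_nonpos_of_intCast {a : ℝ} (ha : ∃ n : ℤ, a = n) (h : a ≤ 1) :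
    a = 1 ∨ a ≤ 0 := by
  obtain ⟨n, rfl⟩ := ha
  have : n ≤ 1 := by exact_mod_cast h
  obtain rfl | h' : n = 1 ∨ n ≤ 0 := by omega
  exacts [Or.inl (by simp), Or.inr (by exact_mod_cast h')]

theorem eq_neg_one_or_nonneg_of_intCast {a : ℝ} (ha : ∃ n : ℤ, a = n) (h : -1 ≤ a) :
    a = -1 ∨ 0 ≤ a := by
  obtain ⟨n, rfl⟩ := ha
  have : -1 ≤ n := by exact_mod_cast h
  obtain rfl | h' : n = -1 ∨ 0 ≤ n := by omega
  exacts [Or.inl (by simp), Or.inr (by exact_mod_cast h')]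

theorem Finset.eq_zero_or_exists_eq_neg_one_of_intCast {α : Type*} {s : Finset α} {f : α → ℝ}
    (hint : ∀ a ∈ s, ∃ n : ℤ, f a = n) (hf : ∀ a ∈ s, f a ≤ 0) (hsum : -1 ≤ ∑ a ∈ s, f a) :
    (∀ a ∈ s, f a = 0) ∨ ∃ a ∈ s, f a = -1 ∧ ∀ a' ∈ s, a' ≠ a → f a' = 0 := by
  classical
  by_cases hzero : ∀ a ∈ s, f a = 0
  · exact Or.inl hzero
  push Not at hzero
  obtain ⟨a, ha, hfa⟩ := hzero
  have hle : f a ≤ -1 := by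
    obtain ⟨n, hn⟩ := hint a ha
    have : n ≤ 0 := by exact_mod_cast hn ▸ hf a ha
    have : n ≠ 0 := by rintro rfl; simp [hn] at hfa
    rw [hn]; exact_mod_cast (by omega : n ≤ -1)
  have hrest_nonpos : ∀ x ∈ s.erase a, f x ≤ 0 := fun x hx => hf x (mem_of_mem_erase hx)
  have hsplit := add_sum_erase s f ha
  have hrest : ∑ x ∈ s.erase a, f x = 0 :=
    le_antisymm (sum_nonpos hrest_nonpos) (by linarith)
  refine Or.inr ⟨a, ha, by linarith, fun a' ha' hne => ?_⟩
  exact (sum_eq_zero_iff_of_nonpos hrest_nonpos).1 hrest a' (mem_erase.2 ⟨hne, ha'⟩)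

theorem Finset.eq_zero_of_forall_sum_fiber_nonneg {α β : Type*} [DecidableEq β] {s : Finset α}
    {g : α → β} {c : α → ℝ} {a : α} (hc : ∀ b ∈ s, g b ≠ g a → c b ≤ 0)
    (hsum : ∀ b ∈ s, g b ≠ g a → 0 ≤ ∑ b' ∈ s with g b' = g b, c b') :
    ∀ b ∈ s, g b ≠ g a → c b = 0 := by
  intro b hb hba
  have hnonpos : ∀ b' ∈ s.filter (g · = g b), c b' ≤ 0 := fun b' hb' => by
    rw [Finset.mem_filter] at hb'
    exact hc b' hb'.1 (hb'.2 ▸ hba)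
  exact (Finset.sum_eq_zero_iff_of_nonpos hnonpos).1
    (le_antisymm (Finset.sum_nonpos hnonpos) (hsum b hb hba)) b (Finset.mem_filter.2 ⟨hb, rfl⟩)

theorem Finset.mem_biUnion_product_self_iff {α β : Type*} [DecidableEq α] {B : Finset α}
    {t : ℕ} {C : Fin t → Finset α} {g : α → β} (hcover : ∀ b, b ∈ B ↔ ∃ i, b ∈ C i)
    (heq : ∀ i, ∀ b ∈ C i, ∀ b' ∈ C i, g b = g b')
    (hsep : ∀ i j, i ≠ j → ∀ b ∈ C i, ∀ b' ∈ C j, g b ≠ g b') {p : α × α} :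
    p ∈ Finset.univ.biUnion (fun i => C i ×ˢ C i) ↔ p.1 ∈ B ∧ p.2 ∈ B ∧ g p.1 = g p.2 := by
  simp only [Finset.mem_biUnion, Finset.mem_univ, true_and, Finset.mem_product]
  constructor
  · rintro ⟨i, h₁, h₂⟩
    exact ⟨(hcover _).2 ⟨i, h₁⟩, (hcover _).2 ⟨i, h₂⟩, heq i _ h₁ _ h₂⟩
  · rintro ⟨h₁, h₂, hg⟩
    obtain ⟨i, hi⟩ := (hcover _).1 h₁
    obtain ⟨j, hj⟩ := (hcover _).1 h₂
    obtain rfl : i = j := by_contra fun hij => hsep i j hij _ hi _ hj hg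
    exact ⟨i, hi, hj⟩

theorem Finset.card_eq_sum_card_of_partition {α : Type*} {B : Finset α} {t : ℕ}
    {C : Fin t → Finset α} (hcover : ∀ b, b ∈ B ↔ ∃ i, b ∈ C i)
    (hdisj : ∀ i j, i ≠ j → Disjoint (C i) (C j)) : B.card = ∑ i, (C i).card := by
  classical
  rw [← Finset.card_biUnion fun i _ j _ hij => hdisj i j hij]
  congr 1
  ext b
  simp [hcover b]

theorem Finset.card_image_eq_of_partition {α β : Type*} [DecidableEq β] {B : Finset α} {t : ℕ}
    {C : Fin t → Finset α} {g : α → β} (hne : ∀ i, (C i).Nonempty)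
    (hcover : ∀ b, b ∈ B ↔ ∃ i, b ∈ C i) (heq : ∀ i, ∀ b ∈ C i, ∀ b' ∈ C i, g b = g b')
    (hsep : ∀ i j, i ≠ j → ∀ b ∈ C i, ∀ b' ∈ C j, g b ≠ g b') : (B.image g).card = t := by
  choose rep hrep using hne
  have himage : B.image g = Finset.univ.image (g ∘ rep) := by
    ext y
    simp only [Finset.mem_image, Finset.mem_univ, true_and, Function.comp_apply]
    constructor
    · rintro ⟨b, hb, rfl⟩
      obtain ⟨i, hi⟩ := (hcover b).1 hb
      exact ⟨i, heq i _ (hrep i) _ hi⟩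
    · rintro ⟨i, rfl⟩
      exact ⟨rep i, (hcover _).2 ⟨i, hrep i⟩, rfl⟩
  have hinj : Function.Injective (g ∘ rep) := fun i j h => by_contra fun hij =>
    hsep i j hij _ (hrep i) _ (hrep j) h
  rw [himage, Finset.card_image_of_injective _ hinj, Finset.card_univ, Fintype.card_fin]

namespace IsFacetNormal

variable {P F : Set (Fin d → ℝ)} {η x : Fin d → ℝ}

theorem mem_iff (h : IsFacetNormal P η F) : x ∈ F ↔ x ∈ P ∧ η ⬝ᵥ x = -1 := by
  rw [h.2.1]; rfl

theorem subset (h : IsFacetNormal P η F) : F ⊆ P := fun _ hx => (h.mem_iff.1 hx).1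

theorem le (h : IsFacetNormal P η F) (hx : x ∈ P) : -1 ≤ η ⬝ᵥ x := h.1 x hx

theorem eq_neg_one (h : IsFacetNormal P η F) (hx : x ∈ F) : η ⬝ᵥ x = -1 :=
  (h.mem_iff.1 hx).2

theorem eq_neg_one_of_mem_affineSpan (h : IsFacetNormal P η F) (hx : x ∈ affineSpan ℝ F) :
    η ⬝ᵥ x = -1 := by
  refine affineSpan_induction hx (fun y hy => h.eq_neg_one hy) fun c u v w hu hv hw => ?_
  simp only [vsub_eq_sub, vadd_eq_add, dotProduct_add, dotProduct_smul, dotProduct_sub, hu, hv,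
    hw, smul_eq_mul]
  ring

end IsFacetNormal

theorem exists_add_smul_mem_of_mem_intrinsicInterior {E : Type*} [NormedAddCommGroup E]
    [NormedSpace ℝ E] {F : Set E} {m w : E} (hm : m ∈ intrinsicInterior ℝ F)
    (hw : w ∈ vectorSpan ℝ F) : ∃ ε : ℝ, 0 < ε ∧ m + ε • w ∈ F := by
  obtain ⟨p, hp, rfl⟩ := mem_intrinsicInterior.1 hm
  have hline : ∀ ε : ℝ, (p : E) + ε • w ∈ affineSpan ℝ F := fun ε => by
    rw [add_comm]
    refine AffineSubspace.vadd_mem_of_mem_direction ?_ p.2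
    rw [direction_affineSpan]
    exact Submodule.smul_mem _ ε hw
  let γ : ℝ → affineSpan ℝ F := fun ε => ⟨p + ε • w, hline ε⟩
  have hγ : Continuous γ := by fun_prop
  have h0 : γ 0 = p := by ext; simp [γ]
  obtain ⟨ε, hε, hball⟩ := Metric.isOpen_iff.1 (isOpen_interior.preimage hγ) 0 (by simpa [h0])
  have hmem : ε / 2 ∈ Metric.ball (0 : ℝ) ε := by
    rw [Metric.mem_ball, Real.dist_eq, sub_zero, abs_of_pos (half_pos hε)]
    exact half_lt_self hε
  exact ⟨ε / 2, half_pos hε, (interior_subset (hball hmem) : γ (ε / 2) ∈ Subtype.val ⁻¹' F)⟩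

theorem dotProduct_eq_zero_of_mem_vectorSpan {F : Set (Fin d → ℝ)} {m y w : Fin d → ℝ}
    (hm : m ∈ intrinsicInterior ℝ F) (hy : ∀ x ∈ F, -1 ≤ y ⬝ᵥ x) (hym : y ⬝ᵥ m = -1)
    (hw : w ∈ vectorSpan ℝ F) : y ⬝ᵥ w = 0 := by
  have hnonneg : ∀ v ∈ vectorSpan ℝ F, 0 ≤ y ⬝ᵥ v := fun v hv => by
    obtain ⟨ε, hε, hεF⟩ := exists_add_smul_mem_of_mem_intrinsicInterior hm hv
    have := hy _ hεF
    rw [dotProduct_add, hym, dotProduct_smul, smul_eq_mul] at this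
    nlinarith
  have := hnonneg (-w) (Submodule.neg_mem _ hw)
  rw [dotProduct_neg] at this
  linarith [hnonneg w hw]

theorem IsFacetNormal.eq_of_mem_intrinsicInterior {P F : Set (Fin d → ℝ)} {η m y : Fin d → ℝ}
    (h : IsFacetNormal P η F) (hm : m ∈ intrinsicInterior ℝ F) (hy : ∀ x ∈ P, -1 ≤ y ⬝ᵥ x)
    (hym : y ⬝ᵥ m = -1) : y = η := by
  have hmF := intrinsicInterior_subset hm
  have hηm := h.eq_neg_one hmF
  have hvan : ∀ {z}, (∀ x ∈ P, -1 ≤ z ⬝ᵥ x) → z ⬝ᵥ m = -1 → ∀ w ∈ vectorSpan ℝ F, z ⬝ᵥ w = 0 :=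
    fun hz hzm _ hw =>
      dotProduct_eq_zero_of_mem_vectorSpan hm (fun x hx => hz x (h.subset hx)) hzm hw
  have hm_notMem : m ∉ vectorSpan ℝ F := fun hmem => by
    simpa [hηm] using hvan h.1 hηm m hmem
  -- `y - η` vanishes on `vectorSpan F` and at `m`, and these span everything since `F` is a facet.
  have htop : vectorSpan ℝ F ⊔ ℝ ∙ m = ⊤ := by
    apply Submodule.eq_top_of_finrank_eq
    have hle := Submodule.finrank_le (vectorSpan ℝ F ⊔ ℝ ∙ m)
    rw [Submodule.finrank_sup_span_singleton hm_notMem, h.2.2.2] at hle ⊢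
    simp only [Module.finrank_fin_fun] at hle ⊢
    omega
  rw [← sub_eq_zero, ← dotProduct_eq_zero_iff]
  intro v
  obtain ⟨u, hu, v', hv', rfl⟩ := Submodule.mem_sup.1 (htop ▸ Submodule.mem_top : v ∈ _)
  obtain ⟨c, rfl⟩ := Submodule.mem_span_singleton.1 hv'
  simp only [sub_dotProduct, dotProduct_add, dotProduct_smul, hvan hy hym u hu,
    hvan h.1 hηm u hu, hym, hηm]
  simp

theorem mem_polarDual_iff {P : Set (Fin d → ℝ)} {y : Fin d → ℝ} :
    y ∈ polarDual P ↔ ∀ x ∈ P, -1 ≤ y ⬝ᵥ x := by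
  simp only [dotProduct_comm y]
  rfl

theorem IsFacetNormal.rootFacet_eq {P F : Set (Fin d → ℝ)} {η m : Fin d → ℝ}
    (hη : IsFacetNormal P η F) (hmF : m ∈ intrinsicInterior ℝ F) : rootFacet P m = F := by
  suffices {F' | IsFacet P F' ∧ m ∈ intrinsicInterior ℝ F'} = {F} by
    rw [rootFacet, this, Set.sUnion_singleton]
  ext F'
  refine ⟨fun ⟨⟨η', hη'⟩, hmF'⟩ => ?_, fun h => h ▸ ⟨⟨η, hη⟩, hmF⟩⟩
  have : η = η' := hη'.eq_of_mem_intrinsicInterior hmF' hη.1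
    (hη.eq_neg_one (intrinsicInterior_subset hmF))
  rw [Set.mem_singleton_iff, hη'.2.1, ← this, ← hη.2.1]

theorem rootNormal_congr {P : Set (Fin d → ℝ)} {m m' : Fin d → ℝ}
    (h : rootFacet P m = rootFacet P m') : rootNormal P m = rootNormal P m' := by
  rw [rootNormal, h, rootNormal]

namespace IsRoot

variable {P : Set (Fin d → ℝ)} {m : Fin d → ℝ}

theorem isFacetNormal (hm : IsRoot P m) : IsFacetNormal P (rootNormal P m) (rootFacet P m) := by
  obtain ⟨-, F, ⟨η, hη⟩, hmF⟩ := hm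
  rw [rootNormal, hη.rootFacet_eq hmF]
  exact Classical.epsilon_spec (p := fun η => IsFacetNormal P η F) ⟨η, hη⟩

theorem mem_intrinsicInterior (hm : IsRoot P m) : m ∈ intrinsicInterior ℝ (rootFacet P m) := by
  obtain ⟨-, F, ⟨η, hη⟩, hmF⟩ := hm
  rwa [hη.rootFacet_eq hmF]

theorem mem_rootFacet (hm : IsRoot P m) : m ∈ rootFacet P m :=
  intrinsicInterior_subset hm.mem_intrinsicInterior

theorem mem (hm : IsRoot P m) : m ∈ P := hm.isFacetNormal.subset hm.mem_rootFacet

theorem rootNormal_dotProduct_self (hm : IsRoot P m) : rootNormal P m ⬝ᵥ m = -1 :=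
  hm.isFacetNormal.eq_neg_one hm.mem_rootFacet

theorem ne_zero (hm : IsRoot P m) : m ≠ 0 := by
  rintro rfl
  simpa using hm.rootNormal_dotProduct_self

theorem rootNormal_mem_polarDual (hm : IsRoot P m) : rootNormal P m ∈ polarDual P :=
  mem_polarDual_iff.2 fun _ hx => hm.isFacetNormal.le hx

theorem eq_rootNormal (hm : IsRoot P m) {y : Fin d → ℝ} (hy : y ∈ polarDual P)
    (hym : y ⬝ᵥ m = -1) : y = rootNormal P m :=
  hm.isFacetNormal.eq_of_mem_intrinsicInterior hm.mem_intrinsicInterior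
    (mem_polarDual_iff.1 hy) hym

theorem rootFacet_eq_iff {m' : Fin d → ℝ} (hm : IsRoot P m) (hm' : IsRoot P m') :
    rootFacet P m = rootFacet P m' ↔ rootNormal P m = rootNormal P m' := by
  refine ⟨rootNormal_congr, fun h => ?_⟩
  rw [hm.isFacetNormal.2.1, hm'.isFacetNormal.2.1, h]

theorem rootNormal_neg_dotProduct (hm : IsRoot P (-m)) : rootNormal P (-m) ⬝ᵥ m = 1 := by
  simpa using hm.rootNormal_dotProduct_self

end IsRoot

theorem mem_of_forall_mem_polarDual {P : Set (Fin d → ℝ)} (hconv : Convex ℝ P)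
    (hclosed : IsClosed P) (h0 : 0 ∈ P) {x : Fin d → ℝ}
    (hx : ∀ y ∈ polarDual P, -1 ≤ y ⬝ᵥ x) : x ∈ P := by
  by_contra hxP
  obtain ⟨f, u, hfx, hfP⟩ := geometric_hahn_banach_point_closed hconv hclosed hxP
  -- Rescaled so that it is `> -1` on `P`, the separating functional is a point of `P*`.
  have hu : u < 0 := by simpa using hfP 0 h0
  set v := (dotProductEquiv ℝ (Fin d)).symm f.toLinearMap
  have hv : ∀ z, v ⬝ᵥ z = f z := fun z => by
    rw [← dotProductEquiv_apply_apply, LinearEquiv.apply_symm_apply]; rfl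
  have hdual : (-u)⁻¹ • v ∈ polarDual P := mem_polarDual_iff.2 fun p hp => by
    rw [smul_dotProduct, hv, smul_eq_mul, inv_mul_eq_div, le_div_iff₀ (by linarith)]
    linarith [hfP p hp]
  have := hx _ hdual
  rw [smul_dotProduct, hv, smul_eq_mul, inv_mul_eq_div, le_div_iff₀ (by linarith)] at this
  linarith

theorem mem_iff_forall_dotProduct_of_polarDual_eq {P : Set (Fin d → ℝ)} (hconv : Convex ℝ P)
    (hclosed : IsClosed P) (h0 : 0 ∈ P) {W : Set (Fin d → ℝ)}
    (hW : polarDual P = convexHull ℝ W) {x : Fin d → ℝ} :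
    x ∈ P ↔ ∀ u ∈ W, -1 ≤ u ⬝ᵥ x := by
  refine ⟨fun hx u hu => ?_, fun h => mem_of_forall_mem_polarDual hconv hclosed h0 fun y hy => ?_⟩
  · exact mem_polarDual_iff.1 (hW ▸ subset_convexHull ℝ W hu) x hx
  · obtain ⟨u, hu, hle⟩ := ((dotProductEquiv ℝ (Fin d) x).concaveOn convex_univ
      ).exists_le_of_mem_convexHull (Set.subset_univ W) (hW ▸ hy)
    simp only [dotProductEquiv_apply_apply, dotProduct_comm x] at hle
    linarith [h u hu]

theorem IsRoot.rootNormal_mem_of_polarDual_eq {P : Set (Fin d → ℝ)} {m : Fin d → ℝ}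
    (hm : IsRoot P m) {W : Set (Fin d → ℝ)} (hW : polarDual P = convexHull ℝ W) :
    rootNormal P m ∈ W := by
  obtain ⟨u, hu, hle⟩ := ((dotProductEquiv ℝ (Fin d) m).concaveOn convex_univ
    ).exists_le_of_mem_convexHull (Set.subset_univ W) (hW ▸ hm.rootNormal_mem_polarDual)
  simp only [dotProductEquiv_apply_apply, dotProduct_comm m] at hle
  have hudual : u ∈ polarDual P := hW ▸ subset_convexHull ℝ W hu
  have hum : u ⬝ᵥ m = -1 := le_antisymm (hm.rootNormal_dotProduct_self ▸ hle)
    (mem_polarDual_iff.1 hudual m hm.mem)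
  rwa [← hm.eq_rootNormal hudual hum]

namespace IsReflexive

variable {P : Set (Fin d → ℝ)}

theorem convex (hP : IsReflexive P) : Convex ℝ P := by
  obtain ⟨⟨V, -, hV⟩, -⟩ := hP
  exact hV ▸ convex_convexHull ℝ _

theorem isClosed (hP : IsReflexive P) : IsClosed P := by
  obtain ⟨⟨V, -, hV⟩, -⟩ := hP
  exact hV ▸ (V.finite_toSet.isCompact_convexHull ℝ).isClosed

theorem zero_mem (hP : IsReflexive P) : (0 : Fin d → ℝ) ∈ P := interior_subset hP.2.1

theorem isLatticePt_rootNormal (hP : IsReflexive P) {m : Fin d → ℝ} (hm : IsRoot P m) :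
    IsLatticePt (rootNormal P m) := by
  obtain ⟨W, hWlat, hW⟩ := hP.2.2
  exact hWlat _ (hm.rootNormal_mem_of_polarDual_eq hW)

end IsReflexive

theorem IsFacetNormal.mem_intrinsicInterior_of_forall_lt {P F : Set (Fin d → ℝ)}
    {η x : Fin d → ℝ} {W : Finset (Fin d → ℝ)} (hP : ∀ y, y ∈ P ↔ ∀ u ∈ W, -1 ≤ u ⬝ᵥ y)
    (hη : IsFacetNormal P η F) (hx : x ∈ F) (hlt : ∀ u ∈ W, u ≠ η → -1 < u ⬝ᵥ x) :
    x ∈ intrinsicInterior ℝ F := by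
  set O := {y : Fin d → ℝ | ∀ u ∈ W, u ≠ η → -1 < u ⬝ᵥ y}
  have hO : IsOpen O := by
    simp only [O, Set.ofPred_forall]
    refine isOpen_biInter_finset fun u _ => isOpen_iInter_of_finite fun _ => ?_
    exact isOpen_lt continuous_const (by fun_prop)
  have hOF : ∀ y ∈ affineSpan ℝ F, y ∈ O → y ∈ F := fun y hyF hyO => by
    have hηy := hη.eq_neg_one_of_mem_affineSpan hyF
    refine hη.mem_iff.2 ⟨(hP y).2 fun u hu => ?_, hηy⟩
    by_cases hu' : u = η
    · exact (hu' ▸ hηy).ge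
    · exact (hyO u hu hu').le
  refine mem_intrinsicInterior.2 ⟨⟨x, subset_affineSpan ℝ F hx⟩, ?_, rfl⟩
  exact interior_maximal (fun y hy => hOF y.1 y.2 hy) (hO.preimage continuous_subtype_val) hlt

theorem eq_rootNormal_or_eq_rootNormal_neg_or_dotProduct_eq_zero {P : Set (Fin d → ℝ)}
    {b u : Fin d → ℝ} (hb : IsRoot P b) (hnb : IsRoot P (-b)) (hu : u ∈ polarDual P)
    (hu_lat : IsLatticePt u) :
    u = rootNormal P b ∨ u = rootNormal P (-b) ∨ u ⬝ᵥ b = 0 := by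
  have hlo := mem_polarDual_iff.1 hu b hb.mem
  have hhi := mem_polarDual_iff.1 hu (-b) hnb.mem
  rw [dotProduct_neg] at hhi
  rcases eq_neg_one_or_eq_zero_or_eq_one_of_intCast (hu_lat.exists_dotProduct_eq_intCast hb.1)
    hlo (by linarith) with h | h | h
  · exact Or.inl (hb.eq_rootNormal hu h)
  · exact Or.inr (Or.inr h)
  · exact Or.inr (Or.inl (hnb.eq_rootNormal hu (by rw [dotProduct_neg, h])))

theorem eq_rootNormal_or_dotProduct_sub_nonneg {P : Set (Fin d → ℝ)} {b b' u : Fin d → ℝ}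
    (hb : IsRoot P b) (hnb : IsRoot P (-b)) (hb' : IsRoot P b') (hnb' : IsRoot P (-b'))
    (hequiv : rootFacet P (-b) = rootFacet P (-b')) (hu : u ∈ polarDual P)
    (hu_lat : IsLatticePt u) : u = rootNormal P b ∨ 0 ≤ u ⬝ᵥ (b - b') := by
  have hθ : rootNormal P (-b) = rootNormal P (-b') := rootNormal_congr hequiv
  rw [dotProduct_sub]
  rcases eq_rootNormal_or_eq_rootNormal_neg_or_dotProduct_eq_zero hb hnb hu hu_lat
    with rfl | rfl | hub
  · exact Or.inl rfl
  · rw [hnb.rootNormal_neg_dotProduct, hθ, hnb'.rootNormal_neg_dotProduct, sub_self]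
    exact Or.inr le_rfl
  rcases eq_rootNormal_or_eq_rootNormal_neg_or_dotProduct_eq_zero hb' hnb' hu hu_lat
    with rfl | rfl | hub'
  · rw [hub, hb'.rootNormal_dotProduct_self]
    exact Or.inr (by norm_num)
  · rw [← hθ, hnb.rootNormal_neg_dotProduct] at hub
    norm_num at hub
  · rw [hub, hub', sub_self]
    exact Or.inr le_rfl

theorem isRoot_sub_of_rootFacet_neg_eq {P : Set (Fin d → ℝ)} {b b' : Fin d → ℝ}
    (hP : IsReflexive P) (hb : IsRoot P b) (hnb : IsRoot P (-b)) (hb' : IsRoot P b')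
    (hnb' : IsRoot P (-b')) (horth : rootNormal P b ⬝ᵥ b' = 0)
    (hequiv : rootFacet P (-b) = rootFacet P (-b')) :
    IsRoot P (b - b') ∧ rootFacet P (b - b') = rootFacet P b := by
  obtain ⟨W, hW_lat, hW⟩ := hP.2.2
  have hmem : ∀ y, y ∈ P ↔ ∀ u ∈ W, -1 ≤ u ⬝ᵥ y := fun y =>
    mem_iff_forall_dotProduct_of_polarDual_eq hP.convex hP.isClosed hP.zero_mem hW
  have key : ∀ u ∈ W, u = rootNormal P b ∨ 0 ≤ u ⬝ᵥ (b - b') := fun u hu =>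
    eq_rootNormal_or_dotProduct_sub_nonneg hb hnb hb' hnb' hequiv
      (hW ▸ subset_convexHull ℝ _ hu) (hW_lat u hu)
  have hval : rootNormal P b ⬝ᵥ (b - b') = -1 := by
    rw [dotProduct_sub, hb.rootNormal_dotProduct_self, horth, sub_zero]
  have hF : b - b' ∈ rootFacet P b := by
    refine hb.isFacetNormal.mem_iff.2 ⟨(hmem _).2 fun u hu => ?_, hval⟩
    rcases key u hu with rfl | h
    exacts [hval.ge, by linarith]
  have hrel := hb.isFacetNormal.mem_intrinsicInterior_of_forall_lt hmem hF
    fun u hu hne => by linarith [(key u hu).resolve_left hne]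
  exact ⟨⟨hb.1.sub hb'.1, _, ⟨_, hb.isFacetNormal⟩, hrel⟩, hb.isFacetNormal.rootFacet_eq hrel⟩

theorem exists_rootNormal_eq_of_mem_span {P : Set (Fin d → ℝ)} {B : Finset (Fin d → ℝ)}
    {m : Fin d → ℝ} (hP : IsReflexive P) (hB : ∀ b ∈ B, IsRoot P b ∧ IsRoot P (-b))
    (hm : IsRoot P m) (hspan : m ∈ Submodule.span ℝ (B : Set (Fin d → ℝ))) :
    ∃ b ∈ B, rootNormal P m = rootNormal P b ∨ rootNormal P m = rootNormal P (-b) := by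
  by_contra! h
  have hker : Submodule.span ℝ (B : Set (Fin d → ℝ)) ≤
      LinearMap.ker (dotProductEquiv ℝ (Fin d) (rootNormal P m)) := by
    refine Submodule.span_le.2 fun b hb => ?_
    simpa [(h b hb).1, (h b hb).2] using
      eq_rootNormal_or_eq_rootNormal_neg_or_dotProduct_eq_zero (hB b hb).1 (hB b hb).2
        hm.rootNormal_mem_polarDual (hP.isLatticePt_rootNormal hm)
  simpa [hm.rootNormal_dotProduct_self] using hker hspan

section OrthogonalRoots

variable {P : Set (Fin d → ℝ)} {B : Finset (Fin d → ℝ)} {b b' : Fin d → ℝ}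
  (hB : ∀ b ∈ B, IsRoot P b ∧ IsRoot P (-b))
  (horth : ∀ b ∈ B, ∀ b' ∈ B, b ≠ b' → rootNormal P b ⬝ᵥ b' = 0 ∧ rootNormal P b' ⬝ᵥ b = 0)
include hB horth

theorem rootNormal_dotProduct_eq_ite (hb : b ∈ B) (hb' : b' ∈ B) :
    rootNormal P b ⬝ᵥ b' = if b = b' then -1 else 0 := by
  split_ifs with h
  · exact h ▸ (hB b hb).1.rootNormal_dotProduct_self
  · exact (horth b hb b' hb' h).1

theorem rootNormal_injOn : Set.InjOn (rootNormal P) B := fun b hb b' hb' h => by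
  by_contra hne
  have := rootNormal_dotProduct_eq_ite hB horth hb' hb
  rw [← h, rootNormal_dotProduct_eq_ite hB horth hb hb, if_pos rfl, if_neg (Ne.symm hne)] at this
  norm_num at this

theorem rootNormal_dotProduct_sum (c : (Fin d → ℝ) → ℝ) (hb : b ∈ B) :
    rootNormal P b ⬝ᵥ ∑ b' ∈ B, c b' • b' = -c b := by
  rw [dotProduct_sum, Finset.sum_eq_single_of_mem b hb fun b' hb' hne => by
    rw [dotProduct_smul, (horth b hb b' hb' hne.symm).1, smul_zero]]
  rw [dotProduct_smul, (hB b hb).1.rootNormal_dotProduct_self, smul_eq_mul, mul_neg_one]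

variable (hP : IsReflexive P)
include hP

theorem rootNormal_neg_dotProduct_eq_zero (hb : b ∈ B) (hb' : b' ∈ B)
    (h : rootFacet P (-b) ≠ rootFacet P (-b')) : rootNormal P (-b) ⬝ᵥ b' = 0 := by
  have hne : b ≠ b' := fun h' => h (h' ▸ rfl)
  rcases eq_rootNormal_or_eq_rootNormal_neg_or_dotProduct_eq_zero (hB b' hb').1 (hB b' hb').2
    (hB b hb).2.rootNormal_mem_polarDual (hP.isLatticePt_rootNormal (hB b hb).2)
    with h' | h' | h'
  · have := (horth b hb b' hb' hne).2
    rw [← h', (hB b hb).2.rootNormal_neg_dotProduct] at this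
    norm_num at this
  · exact absurd (((hB b hb).2.rootFacet_eq_iff (hB b' hb').2).2 h') h
  · exact h'

theorem rootNormal_ne_rootNormal_neg (hb : b ∈ B) (hb' : b' ∈ B) :
    rootNormal P b ≠ rootNormal P (-b') := by
  intro h
  have h1 := (hB b hb).1.rootNormal_dotProduct_self
  by_cases hfac : rootFacet P (-b') = rootFacet P (-b)
  · rw [h, rootNormal_congr hfac, (hB b hb).2.rootNormal_neg_dotProduct] at h1
    norm_num at h1
  · rw [h, rootNormal_neg_dotProduct_eq_zero hB horth hP hb' hb hfac] at h1
    norm_num at h1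

open Classical in
theorem rootNormal_neg_dotProduct_sum (c : (Fin d → ℝ) → ℝ) (hb : b ∈ B) :
    rootNormal P (-b) ⬝ᵥ ∑ b' ∈ B, c b' • b' =
      ∑ b' ∈ B with rootFacet P (-b') = rootFacet P (-b), c b' := by
  rw [dotProduct_sum, Finset.sum_filter]
  refine Finset.sum_congr rfl fun b' hb' => ?_
  rw [dotProduct_smul, smul_eq_mul]
  split_ifs with h
  · rw [rootNormal_congr h.symm, (hB b' hb').2.rootNormal_neg_dotProduct, mul_one]
  · rw [rootNormal_neg_dotProduct_eq_zero hB horth hP hb hb' (Ne.symm h), mul_zero]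

variable {m : Fin d → ℝ} {c : (Fin d → ℝ) → ℝ} (hm : IsRoot P m) (hc : ∑ b ∈ B, c b • b = m)
include hm hc

theorem exists_coeff_eq_intCast (hb : b ∈ B) : ∃ n : ℤ, c b = n := by
  obtain ⟨n, hn⟩ := (hP.isLatticePt_rootNormal (hB b hb).1).exists_dotProduct_eq_intCast hm.1
  rw [← hc, rootNormal_dotProduct_sum hB horth c hb] at hn
  exact ⟨-n, by push_cast; linarith⟩

theorem rootNormal_eq_or_coeff_nonpos (hb : b ∈ B) :
    rootNormal P b = rootNormal P m ∨ c b ≤ 0 := by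
  have hval : rootNormal P b ⬝ᵥ m = -c b := hc ▸ rootNormal_dotProduct_sum hB horth c hb
  have hle : c b ≤ 1 := by linarith [(hB b hb).1.isFacetNormal.le hm.mem]
  refine (eq_one_or_nonpos_of_intCast (exists_coeff_eq_intCast hB horth hP hm hc hb) hle).imp
    (fun h1 => hm.eq_rootNormal (hB b hb).1.rootNormal_mem_polarDual ?_) id
  rw [hval, h1]

open Classical in
theorem rootNormal_neg_eq_or_sum_fiber_nonneg (hb : b ∈ B) :
    rootNormal P (-b) = rootNormal P m ∨
      0 ≤ ∑ b' ∈ B with rootFacet P (-b') = rootFacet P (-b), c b' := by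
  have hval := hc ▸ rootNormal_neg_dotProduct_sum hB horth hP c hb
  have hint : ∃ n : ℤ, rootNormal P (-b) ⬝ᵥ m = n :=
    (hP.isLatticePt_rootNormal (hB b hb).2).exists_dotProduct_eq_intCast hm.1
  rw [hval] at hint
  refine (eq_neg_one_or_nonneg_of_intCast hint ?_).imp
    (fun h => hm.eq_rootNormal (hB b hb).2.rootNormal_mem_polarDual (hval ▸ h)) id
  rw [← hval]
  exact (hB b hb).2.isFacetNormal.le hm.mem

theorem eq_or_eq_sub_of_rootNormal_eq {b₀ : Fin d → ℝ} (hb₀ : b₀ ∈ B)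
    (hη : rootNormal P b₀ = rootNormal P m) :
    m = b₀ ∨ ∃ b₁ ∈ B, b₀ ≠ b₁ ∧ rootFacet P (-b₀) = rootFacet P (-b₁) ∧ m = b₀ - b₁ := by
  classical
  set K := {b ∈ B | rootFacet P (-b) = rootFacet P (-b₀)}
  have hb₀K : b₀ ∈ K := Finset.mem_filter.2 ⟨hb₀, rfl⟩
  have hcb₀ : c b₀ = 1 := by
    have := rootNormal_dotProduct_sum hB horth c hb₀
    rw [hc, hη, hm.rootNormal_dotProduct_self] at this
    linarith
  have hcle : ∀ b ∈ B, b ≠ b₀ → c b ≤ 0 := fun b hb hne =>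
    (rootNormal_eq_or_coeff_nonpos hB horth hP hm hc hb).resolve_left fun h =>
      hne (rootNormal_injOn hB horth hb hb₀ (h.trans hη.symm))
  have hsum : ∀ b ∈ B, 0 ≤ ∑ b' ∈ B with rootFacet P (-b') = rootFacet P (-b), c b' :=
    fun b hb => (rootNormal_neg_eq_or_sum_fiber_nonneg hB horth hP hm hc hb).resolve_left
      fun h => rootNormal_ne_rootNormal_neg hB horth hP hb₀ hb (hη.trans h.symm)
  have hvan := Finset.eq_zero_of_forall_sum_fiber_nonneg (g := fun b => rootFacet P (-b))
    (a := b₀) (fun b hb hne => hcle b hb fun h => hne (by rw [h])) fun b hb _ => hsum b hb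
  have hm_eq : m = b₀ + ∑ b ∈ K.erase b₀, c b • b := by
    rw [← hc, ← Finset.sum_filter_of_ne fun b hb hcb => by_contra fun hne =>
      hcb (by rw [hvan b hb hne, zero_smul]), ← Finset.add_sum_erase K _ hb₀K, hcb₀, one_smul]
  have hrest : -1 ≤ ∑ b ∈ K.erase b₀, c b := by
    linarith [hsum b₀ hb₀, Finset.add_sum_erase K c hb₀K]
  have hK : ∀ b ∈ K.erase b₀, b ∈ B ∧ b ≠ b₀ ∧ rootFacet P (-b) = rootFacet P (-b₀) :=
    fun b hb => by
      obtain ⟨hne, hbK⟩ := Finset.mem_erase.1 hb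
      exact ⟨(Finset.mem_filter.1 hbK).1, hne, (Finset.mem_filter.1 hbK).2⟩
  rcases Finset.eq_zero_or_exists_eq_neg_one_of_intCast
      (fun b hb => exists_coeff_eq_intCast hB horth hP hm hc (hK b hb).1)
      (fun b hb => hcle b (hK b hb).1 (hK b hb).2.1) hrest with h0 | ⟨b₁, hb₁, hcb₁, h0⟩
  · left
    rw [hm_eq, Finset.sum_eq_zero fun b hb => by rw [h0 b hb, zero_smul], add_zero]
  · right
    refine ⟨b₁, (hK b₁ hb₁).1, (hK b₁ hb₁).2.1.symm, (hK b₁ hb₁).2.2.symm, ?_⟩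
    rw [hm_eq, Finset.sum_eq_single_of_mem b₁ hb₁ fun b hb hne => by rw [h0 b hb hne, zero_smul],
      hcb₁, neg_one_smul, sub_eq_add_neg]

theorem eq_neg_of_rootNormal_neg_eq {b₀ : Fin d → ℝ} (hb₀ : b₀ ∈ B)
    (hθ : rootNormal P (-b₀) = rootNormal P m) :
    ∃ b₁ ∈ B, m = -b₁ := by
  classical
  set K := {b ∈ B | rootFacet P (-b) = rootFacet P (-b₀)}
  have hcle : ∀ b ∈ B, c b ≤ 0 := fun b hb =>
    (rootNormal_eq_or_coeff_nonpos hB horth hP hm hc hb).resolve_left fun h =>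
      rootNormal_ne_rootNormal_neg hB horth hP hb hb₀ (h.trans hθ.symm)
  have hsumK : ∑ b ∈ K, c b = -1 := by
    rw [← rootNormal_neg_dotProduct_sum hB horth hP c hb₀, hc, hθ, hm.rootNormal_dotProduct_self]
  have hvan := Finset.eq_zero_of_forall_sum_fiber_nonneg (g := fun b => rootFacet P (-b))
    (a := b₀) (fun b hb _ => hcle b hb) fun b hb hne =>
      (rootNormal_neg_eq_or_sum_fiber_nonneg hB horth hP hm hc hb).resolve_left fun h =>
        hne (((hB b hb).2.rootFacet_eq_iff (hB b₀ hb₀).2).2 (h.trans hθ.symm))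
  have hm_eq : m = ∑ b ∈ K, c b • b := by
    rw [← hc, ← Finset.sum_filter_of_ne fun b hb hcb => by_contra fun hne =>
      hcb (by rw [hvan b hb hne, zero_smul])]
  have hKB : ∀ b ∈ K, b ∈ B := fun b hb => (Finset.mem_filter.1 hb).1
  rcases Finset.eq_zero_or_exists_eq_neg_one_of_intCast
      (fun b hb => exists_coeff_eq_intCast hB horth hP hm hc (hKB b hb))
      (fun b hb => hcle b (hKB b hb)) hsumK.ge with h0 | ⟨b₁, hb₁, hcb₁, h0⟩
  · rw [Finset.sum_eq_zero h0] at hsumK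
    norm_num at hsumK
  · refine ⟨b₁, hKB b₁ hb₁, ?_⟩
    rw [hm_eq, Finset.sum_eq_single_of_mem b₁ hb₁ fun b hb hne => by rw [h0 b hb hne, zero_smul],
      hcb₁, neg_one_smul]

end OrthogonalRoots

theorem isRoot_and_mem_span_iff {P : Set (Fin d → ℝ)} {B : Finset (Fin d → ℝ)}
    {m : Fin d → ℝ} (hP : IsReflexive P) (hB : ∀ b ∈ B, IsRoot P b ∧ IsRoot P (-b))
    (horth : ∀ b ∈ B, ∀ b' ∈ B, b ≠ b' → rootNormal P b ⬝ᵥ b' = 0 ∧ rootNormal P b' ⬝ᵥ b = 0) :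
    IsRoot P m ∧ m ∈ Submodule.span ℝ (B : Set (Fin d → ℝ)) ↔
      m ∈ B ∨ -m ∈ B ∨
        ∃ b ∈ B, ∃ b' ∈ B, b ≠ b' ∧ rootFacet P (-b) = rootFacet P (-b') ∧ m = b - b' := by
  constructor
  · rintro ⟨hm, hspan⟩
    obtain ⟨c, -, hc⟩ := Submodule.mem_span_finset.1 hspan
    obtain ⟨b₀, hb₀, hη | hθ⟩ := exists_rootNormal_eq_of_mem_span hP hB hm hspan
    · rcases eq_or_eq_sub_of_rootNormal_eq hB horth hP hm hc hb₀ hη.symm with rfl | h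
      exacts [Or.inl hb₀, Or.inr (Or.inr ⟨b₀, hb₀, h⟩)]
    · obtain ⟨b₁, hb₁, rfl⟩ := eq_neg_of_rootNormal_neg_eq hB horth hP hm hc hb₀ hθ.symm
      exact Or.inr (Or.inl (by rwa [neg_neg]))
  · rintro (hmB | hmB | ⟨b, hb, b', hb', hne, hequiv, rfl⟩)
    · exact ⟨(hB m hmB).1, Submodule.subset_span hmB⟩
    · exact ⟨neg_neg m ▸ (hB (-m) hmB).2,
        neg_neg m ▸ Submodule.neg_mem _ (Submodule.subset_span hmB)⟩
    · exact ⟨(isRoot_sub_of_rootFacet_neg_eq hP (hB b hb).1 (hB b hb).2 (hB b' hb').1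
        (hB b' hb').2 (horth b hb b' hb' hne).1 hequiv).1,
        Submodule.sub_mem _ (Submodule.subset_span hb) (Submodule.subset_span hb')⟩

theorem isRoot_neg_of_mem_span {P : Set (Fin d → ℝ)} {B : Finset (Fin d → ℝ)} {m : Fin d → ℝ}
    (hP : IsReflexive P) (hB : ∀ b ∈ B, IsRoot P b ∧ IsRoot P (-b))
    (horth : ∀ b ∈ B, ∀ b' ∈ B, b ≠ b' → rootNormal P b ⬝ᵥ b' = 0 ∧ rootNormal P b' ⬝ᵥ b = 0)
    (hm : IsRoot P m) (hspan : m ∈ Submodule.span ℝ (B : Set (Fin d → ℝ))) : IsRoot P (-m) := by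
  rcases (isRoot_and_mem_span_iff hP hB horth).1 ⟨hm, hspan⟩ with
    hmB | hmB | ⟨b, hb, b', hb', hne, hequiv, rfl⟩
  · exact (hB m hmB).2
  · exact (hB (-m) hmB).1
  · rw [neg_sub]
    exact (isRoot_sub_of_rootFacet_neg_eq hP (hB b' hb').1 (hB b' hb').2 (hB b hb).1 (hB b hb).2
      (horth b hb b' hb' hne).2 hequiv.symm).1

open Classical in
noncomputable def pairRoot (p : (Fin d → ℝ) × (Fin d → ℝ)) : Fin d → ℝ :=
  if p.1 = p.2 then p.1 else p.1 - p.2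

open Classical in
theorem union_neg_union_sub_eq {P : Set (Fin d → ℝ)} {B : Finset (Fin d → ℝ)} {t : ℕ}
    {C : Fin t → Finset (Fin d → ℝ)} (hCcover : ∀ b, b ∈ B ↔ ∃ i, b ∈ C i)
    (hCeq : ∀ i, ∀ b ∈ C i, ∀ b' ∈ C i, rootFacet P (-b) = rootFacet P (-b'))
    (hCsep : ∀ i j, i ≠ j → ∀ b ∈ C i, ∀ b' ∈ C j, rootFacet P (-b) ≠ rootFacet P (-b')) :
    (B : Set (Fin d → ℝ)) ∪ -(B : Set (Fin d → ℝ)) ∪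
        {m | ∃ b ∈ B, ∃ b' ∈ B, b ≠ b' ∧ rootFacet P (-b) = rootFacet P (-b') ∧ m = b - b'} =
      ↑(-B ∪ (Finset.univ.biUnion fun i => C i ×ˢ C i).image pairRoot) := by
  ext m
  simp only [Set.mem_union, Finset.coe_union, Finset.coe_neg, Finset.coe_image, Set.mem_image,
    Finset.mem_coe, Set.mem_ofPred_eq, Prod.exists, pairRoot,
    Finset.mem_biUnion_product_self_iff (g := fun b => rootFacet P (-b)) hCcover hCeq hCsep]
  constructor
  · rintro ((hm | hm) | ⟨b, hb, b', hb', hne, hequiv, rfl⟩)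
    · exact Or.inr ⟨m, m, ⟨hm, hm, rfl⟩, if_pos rfl⟩
    · exact Or.inl hm
    · exact Or.inr ⟨b, b', ⟨hb, hb', hequiv⟩, if_neg hne⟩
  · rintro (hm | ⟨b, b', ⟨hb, hb', hequiv⟩, rfl⟩)
    · exact Or.inl (Or.inr hm)
    · by_cases h : b = b'
      · exact Or.inl (Or.inl (by simpa [h] using hb'))
      · exact Or.inr ⟨b, hb, b', hb', h, hequiv, if_neg h⟩

section Counting

variable {P : Set (Fin d → ℝ)} {B : Finset (Fin d → ℝ)}
  (hB : ∀ b ∈ B, IsRoot P b ∧ IsRoot P (-b))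
  (horth : ∀ b ∈ B, ∀ b' ∈ B, b ≠ b' → rootNormal P b ⬝ᵥ b' = 0 ∧ rootNormal P b' ⬝ᵥ b = 0)
include hB horth

theorem rootNormal_dotProduct_pairRoot_eq_neg_one_iff {e b b' : Fin d → ℝ} (he : e ∈ B)
    (hb : b ∈ B) (hb' : b' ∈ B) : rootNormal P e ⬝ᵥ pairRoot (b, b') = -1 ↔ e = b := by
  have hval := fun x (hx : x ∈ B) => rootNormal_dotProduct_eq_ite hB horth he hx
  unfold pairRoot
  split_ifs with hbb'
  · rw [hval b hb]
    split_ifs <;> simp_all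
  · rw [dotProduct_sub, hval b hb, hval b' hb']
    split_ifs <;> simp_all
    norm_num

theorem injOn_pairRoot : Set.InjOn pairRoot {p | p.1 ∈ B ∧ p.2 ∈ B} := by
  rintro ⟨b, b'⟩ ⟨hb, hb'⟩ ⟨e, e'⟩ ⟨he, he'⟩ h
  have hbe : b = e := (rootNormal_dotProduct_pairRoot_eq_neg_one_iff hB horth hb he he').1
    (h ▸ (rootNormal_dotProduct_pairRoot_eq_neg_one_iff hB horth hb hb hb').2 rfl)
  subst hbe
  unfold pairRoot at h
  split_ifs at h with h₁ h₂ h₂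
  · exact Prod.ext rfl (h₁.symm.trans h₂)
  · exact absurd (sub_eq_self.1 h.symm) (hB e' he').1.ne_zero
  · exact absurd (sub_eq_self.1 h) (hB b' hb').1.ne_zero
  · exact Prod.ext rfl (sub_right_inj.1 h)

theorem pairRoot_ne_neg {b b' e : Fin d → ℝ} (hb : b ∈ B) (hb' : b' ∈ B) (he : e ∈ B) :
    pairRoot (b, b') ≠ -e := fun h => by
  have h₁ := (rootNormal_dotProduct_pairRoot_eq_neg_one_iff hB horth hb hb hb').2 rfl
  have h₂ : 0 ≤ rootNormal P b ⬝ᵥ (-e) := by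
    rw [dotProduct_neg, rootNormal_dotProduct_eq_ite hB horth hb he]
    split_ifs <;> norm_num
  rw [h] at h₁
  linarith

theorem ncard_union_neg_union_sub {t : ℕ} {C : Fin t → Finset (Fin d → ℝ)}
    (hCcover : ∀ b, b ∈ B ↔ ∃ i, b ∈ C i)
    (hCdisj : ∀ i j, i ≠ j → Disjoint (C i) (C j))
    (hCeq : ∀ i, ∀ b ∈ C i, ∀ b' ∈ C i, rootFacet P (-b) = rootFacet P (-b'))
    (hCsep : ∀ i j, i ≠ j → ∀ b ∈ C i, ∀ b' ∈ C j, rootFacet P (-b) ≠ rootFacet P (-b')) :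
    ((B : Set (Fin d → ℝ)) ∪ -(B : Set (Fin d → ℝ)) ∪
        {m | ∃ b ∈ B, ∃ b' ∈ B, b ≠ b' ∧ rootFacet P (-b) = rootFacet P (-b') ∧ m = b - b'}).ncard =
      B.card + ∑ i, (C i).card ^ 2 := by
  classical
  have hpairs := fun p => (Finset.mem_biUnion_product_self_iff
    (g := fun b => rootFacet P (-b)) (p := p) hCcover hCeq hCsep).1
  have hdisj : Disjoint (-B) ((Finset.univ.biUnion fun i => C i ×ˢ C i).image pairRoot) := by
    refine Finset.disjoint_left.2 fun x hx hx' => ?_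
    obtain ⟨⟨b, b'⟩, hp, rfl⟩ := Finset.mem_image.1 hx'
    obtain ⟨hb, hb', -⟩ := hpairs _ hp
    exact pairRoot_ne_neg hB horth hb hb' (Finset.mem_neg'.1 hx) (neg_neg _).symm
  rw [union_neg_union_sub_eq hCcover hCeq hCsep, Set.ncard_coe_finset,
    Finset.card_union_of_disjoint hdisj, Finset.card_neg,
    Finset.card_image_of_injOn fun p hp q hq => injOn_pairRoot hB horth
      ⟨(hpairs p hp).1, (hpairs p hp).2.1⟩ ⟨(hpairs q hq).1, (hpairs q hq).2.1⟩,
    Finset.card_biUnion fun i _ j _ hij => Finset.disjoint_product.2 (Or.inl (hCdisj i j hij))]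
  simp [sq]

end Counting

open Classical in
theorem setOf_isFacet_meeting_union_neg_union_sub_eq {P : Set (Fin d → ℝ)}
    {B : Finset (Fin d → ℝ)} (hP : IsReflexive P) (hB : ∀ b ∈ B, IsRoot P b ∧ IsRoot P (-b))
    (horth : ∀ b ∈ B, ∀ b' ∈ B, b ≠ b' → rootNormal P b ⬝ᵥ b' = 0 ∧ rootNormal P b' ⬝ᵥ b = 0) :
    {F | IsFacet P F ∧ ∃ m ∈ (B : Set (Fin d → ℝ)) ∪ -(B : Set (Fin d → ℝ)) ∪
        {m | ∃ b ∈ B, ∃ b' ∈ B, b ≠ b' ∧ rootFacet P (-b) = rootFacet P (-b') ∧ m = b - b'},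
      m ∈ intrinsicInterior ℝ F} =
      ↑(B.image (rootFacet P) ∪ B.image fun b => rootFacet P (-b)) := by
  ext F
  simp only [Set.mem_ofPred_eq, Finset.coe_union, Finset.coe_image, Set.mem_union,
    Set.mem_image, Finset.mem_coe, Set.mem_neg]
  constructor
  · rintro ⟨⟨η, hη⟩, m, hm, hmF⟩
    rw [← hη.rootFacet_eq hmF]
    rcases hm with (hm | hm) | ⟨b, hb, b', hb', hne, hequiv, rfl⟩
    · exact Or.inl ⟨m, hm, rfl⟩
    · exact Or.inr ⟨-m, hm, by rw [neg_neg]⟩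
    · exact Or.inl ⟨b, hb, (isRoot_sub_of_rootFacet_neg_eq hP (hB b hb).1 (hB b hb).2
        (hB b' hb').1 (hB b' hb').2 (horth b hb b' hb' hne).1 hequiv).2.symm⟩
  · rintro (⟨b, hb, rfl⟩ | ⟨b, hb, rfl⟩)
    · exact ⟨⟨_, (hB b hb).1.isFacetNormal⟩, b, Or.inl (Or.inl hb),
        (hB b hb).1.mem_intrinsicInterior⟩
    · exact ⟨⟨_, (hB b hb).2.isFacetNormal⟩, -b, Or.inl (Or.inr (by rwa [neg_neg])),
        (hB b hb).2.mem_intrinsicInterior⟩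

theorem ncard_setOf_isFacet_meeting_union_neg_union_sub {P : Set (Fin d → ℝ)}
    {B : Finset (Fin d → ℝ)} (hP : IsReflexive P) (hB : ∀ b ∈ B, IsRoot P b ∧ IsRoot P (-b))
    (horth : ∀ b ∈ B, ∀ b' ∈ B, b ≠ b' → rootNormal P b ⬝ᵥ b' = 0 ∧ rootNormal P b' ⬝ᵥ b = 0)
    {t : ℕ} {C : Fin t → Finset (Fin d → ℝ)} (hCne : ∀ i, (C i).Nonempty)
    (hCcover : ∀ b, b ∈ B ↔ ∃ i, b ∈ C i)
    (hCeq : ∀ i, ∀ b ∈ C i, ∀ b' ∈ C i, rootFacet P (-b) = rootFacet P (-b'))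
    (hCsep : ∀ i j, i ≠ j → ∀ b ∈ C i, ∀ b' ∈ C j, rootFacet P (-b) ≠ rootFacet P (-b')) :
    {F | IsFacet P F ∧ ∃ m ∈ (B : Set (Fin d → ℝ)) ∪ -(B : Set (Fin d → ℝ)) ∪
        {m | ∃ b ∈ B, ∃ b' ∈ B, b ≠ b' ∧ rootFacet P (-b) = rootFacet P (-b') ∧ m = b - b'},
      m ∈ intrinsicInterior ℝ F}.ncard = B.card + t := by
  classical
  have hdisj : Disjoint (B.image (rootFacet P)) (B.image fun b => rootFacet P (-b)) := by
    simp only [Finset.disjoint_left, Finset.mem_image]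
    rintro _ ⟨b, hb, rfl⟩ ⟨b', hb', h⟩
    exact rootNormal_ne_rootNormal_neg hB horth hP hb hb' (rootNormal_congr h.symm)
  rw [setOf_isFacet_meeting_union_neg_union_sub_eq hP hB horth, Set.ncard_coe_finset,
    Finset.card_union_of_disjoint hdisj,
    Finset.card_image_of_injOn fun b hb b' hb' h => rootNormal_injOn hB horth hb hb'
      (rootNormal_congr h),
    Finset.card_image_eq_of_partition (g := fun b => rootFacet P (-b)) hCne hCcover hCeq hCsep]

theorem stmt6_general {d : ℕ} (P : Set (Fin d → ℝ)) (hP : IsReflexive P)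
    (B : Finset (Fin d → ℝ))
    (hBroot : ∀ b ∈ B, IsRoot P b ∧ IsRoot P (-b))
    (horth : ∀ b ∈ B, ∀ b' ∈ B, b ≠ b' →
      pairR (rootNormal P b) b' = 0 ∧ pairR (rootNormal P b') b = 0)
    (t : ℕ) (C : Fin t → Finset (Fin d → ℝ))
    (hCne : ∀ i, (C i).Nonempty)
    (hCcover : ∀ b, b ∈ B ↔ ∃ i, b ∈ C i)
    (hCdisj : ∀ i j, i ≠ j → Disjoint (C i) (C j))
    (hCeq : ∀ i, ∀ b ∈ C i, ∀ b' ∈ C i, rootFacet P (-b) = rootFacet P (-b'))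
    (hCsep : ∀ i j, i ≠ j → ∀ b ∈ C i, ∀ b' ∈ C j,
      rootFacet P (-b) ≠ rootFacet P (-b'))
    (A : Set (Fin d → ℝ))
    (hA : A = {m | IsRoot P m} ∩ ↑(Submodule.span ℝ (B : Set (Fin d → ℝ)))) :
    (∀ m ∈ A, IsRoot P (-m)) ∧
    A = (B : Set (Fin d → ℝ)) ∪ (-(B : Set (Fin d → ℝ))) ∪
        {m | ∃ b ∈ B, ∃ b' ∈ B, b ≠ b' ∧ rootFacet P (-b) = rootFacet P (-b') ∧
          m = b - b'} ∧
    A.ncard = B.card + ∑ i, (C i).card ^ 2 ∧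
    {F | IsFacet P F ∧ ∃ m ∈ A, m ∈ intrinsicInterior ℝ F}.ncard = B.card + t ∧
    B.card + t ≤ 2 * B.card := by
  have hA_eq : A = (B : Set (Fin d → ℝ)) ∪ (-(B : Set (Fin d → ℝ))) ∪
      {m | ∃ b ∈ B, ∃ b' ∈ B, b ≠ b' ∧ rootFacet P (-b) = rootFacet P (-b') ∧ m = b - b'} := by
    ext m
    simpa [hA, or_assoc] using isRoot_and_mem_span_iff hP hBroot horth
  have ht : t ≤ B.card := by
    rw [Finset.card_eq_sum_card_of_partition hCcover hCdisj]
    calc t = ∑ _i : Fin t, 1 := by simp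
      _ ≤ ∑ i, (C i).card := Finset.sum_le_sum fun i _ => (hCne i).card_pos
  refine ⟨fun m hm => ?_, hA_eq, ?_, ?_, by omega⟩
  · rw [hA] at hm
    exact isRoot_neg_of_mem_span hP hBroot horth hm.1 hm.2
  · rw [hA_eq]
    exact ncard_union_neg_union_sub hBroot horth hCcover hCdisj hCeq hCsep
  · rw [hA_eq]
    exact ncard_setOf_isFacet_meeting_union_neg_union_sub hP hBroot horth hCne hCcover hCeq hCsep

/-- Let `B` be a nonempty set of pairwise orthogonal semisimple roots of a reflexive
polytope `P`, partitioned into equivalence classes `C 0, …, C (t-1)` (two semisimple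
roots `b ≠ b'` being equivalent when `F_{-b} = F_{-b'}`), and let
`A = R ∩ lin_ℝ(B)`. Then every root in `A` is semisimple,
`A = B ∪ (-B) ∪ {b - b' : b ≠ b' equivalent}`, `|A| = |B| + ∑ i, |C i|²`, and the
number of facets of `P` containing an element of `A` is `|B| + t ≤ 2|B|`. -/
theorem stmt6 {d : ℕ} (P : Set (Fin d → ℝ)) (hP : IsReflexive P)
    (B : Finset (Fin d → ℝ)) (hBne : B.Nonempty)
    (hBroot : ∀ b ∈ B, IsRoot P b ∧ IsRoot P (-b))
    (horth : ∀ b ∈ B, ∀ b' ∈ B, b ≠ b' →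
      pairR (rootNormal P b) b' = 0 ∧ pairR (rootNormal P b') b = 0)
    (t : ℕ) (C : Fin t → Finset (Fin d → ℝ))
    (hCne : ∀ i, (C i).Nonempty)
    (hCcover : ∀ b, b ∈ B ↔ ∃ i, b ∈ C i)
    (hCdisj : ∀ i j, i ≠ j → Disjoint (C i) (C j))
    (hCeq : ∀ i, ∀ b ∈ C i, ∀ b' ∈ C i, rootFacet P (-b) = rootFacet P (-b'))
    (hCsep : ∀ i j, i ≠ j → ∀ b ∈ C i, ∀ b' ∈ C j,
      rootFacet P (-b) ≠ rootFacet P (-b'))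
    (A : Set (Fin d → ℝ))
    (hA : A = {m | IsRoot P m} ∩ ↑(Submodule.span ℝ (B : Set (Fin d → ℝ)))) :
    (∀ m ∈ A, IsRoot P (-m)) ∧
    A = (B : Set (Fin d → ℝ)) ∪ (-(B : Set (Fin d → ℝ))) ∪
        {m | ∃ b ∈ B, ∃ b' ∈ B, b ≠ b' ∧ rootFacet P (-b) = rootFacet P (-b') ∧
          m = b - b'} ∧
    A.ncard = B.card + ∑ i, (C i).card ^ 2 ∧
    {F | IsFacet P F ∧ ∃ m ∈ A, m ∈ intrinsicInterior ℝ F}.ncard = B.card + t ∧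
    B.card + t ≤ 2 * B.card :=
  stmt6_general P hP B hBroot horth t C hCne hCcover hCdisj hCeq hCsep A hA
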